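/- Trace of the reciprocal via the minimal polynomial: let L be a field of characteristic zero, b algebraic over L with minimal polynomial g(t) ∈ L[t] of degree m, and write g(t) = (t−b)·g₁(t) with g₁ ∈ L(b)[t]. Then for any n ∈ L(b)[t], the coefficientwise trace satisfies Tr_{L(b)/L}(n(t)/(t−b)) = Tr_{L(b)/L}(n(t)·g₁(t)) / g(t) as elements of L(t), where the trace on the left is applied to the element n/(t−b) of L(b)(t) viewed over L(t). -/

import Mathlib

open Polynomial

noncomputable def ratFuncMap {K F : Type*} [Field K] [Field F] (f : K →+* F) :
    RatFunc K →+* RatFunc F :=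
  RatFunc.mapRingHom (Polynomial.mapRingHom f)
    (fun p hp => by
      rw [Submonoid.mem_comap]
      rw [mem_nonZeroDivisors_iff_ne_zero] at hp ⊢
      simpa [Polynomial.coe_mapRingHom,
        Polynomial.map_eq_zero_iff f.injective] using hp)

noncomputable instance ratFuncAlgebra (L F : Type*) [Field L] [Field F] [Algebra L F] :
    Algebra (RatFunc L) (RatFunc F) :=
  (ratFuncMap (algebraMap L F)).toAlgebra

set_option synthInstance.maxHeartbeats 1000000

lemma div_eq_inv_mul_mul {K : Type*} [Field K] (B D n : K) (hD : D ≠ 0) :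
    n / B = (B * D)⁻¹ * (n * D) := by
  rcases eq_or_ne B 0 with rfl | hB
  · simp
  · field_simp

lemma ratFuncMap_algebraMap {K F : Type*} [Field K] [Field F] (f : K →+* F) (p : K[X]) :
    ratFuncMap f (algebraMap K[X] (RatFunc K) p) = algebraMap F[X] (RatFunc F) (p.map f) := by
  have h : algebraMap K[X] (RatFunc K) p
      = algebraMap K[X] (RatFunc K) p / algebraMap K[X] (RatFunc K) 1 := by simp
  rw [h]
  show (RatFunc.mapRingHom (Polynomial.mapRingHom f) _ : RatFunc K →+* RatFunc F) _ = _
  rw [show ((RatFunc.mapRingHom (Polynomial.mapRingHom f) _ : RatFunc K →+* RatFunc F) : RatFunc K → RatFunc F) = RatFunc.map (Polynomial.mapRingHom f) _ from RatFunc.coe_mapRingHom_eq_coe_map _ _]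
  rw [RatFunc.map_apply_div]
  simp

/-- Trace of the reciprocal via the minimal polynomial: if `F = L(b)` with minimal
polynomial `g` of `b` over `L`, and `g = (t - b)·g₁` in `F[t]`, then for any
`n ∈ L(b)[t]` the trace of `n(t)/(t-b)` for the extension `L(b)(t)/L(t)` equals
`Tr(n·g₁)/g`. -/
theorem trace_reciprocal {L F : Type*} [Field L] [CharZero L] [Field F]
    [Algebra L F] [FiniteDimensional L F]
    (b : F) (hgen : IntermediateField.adjoin L {b} = ⊤)
    (g₁ : F[X]) (hg₁ : (minpoly L b).map (algebraMap L F) = (X - C b) * g₁)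
    (n : F[X]) :
    Algebra.trace (RatFunc L) (RatFunc F)
        (algebraMap F[X] (RatFunc F) n / algebraMap F[X] (RatFunc F) (X - C b))
      = Algebra.trace (RatFunc L) (RatFunc F)
          (algebraMap F[X] (RatFunc F) (n * g₁))
        / algebraMap L[X] (RatFunc L) (minpoly L b) := by
  have hb : IsIntegral L b := Algebra.IsIntegral.isIntegral b
  have hg0 : minpoly L b ≠ 0 := minpoly.ne_zero hb
  have hgmap0 : (minpoly L b).map (algebraMap L F) ≠ 0 := by
    simpa [Polynomial.map_eq_zero_iff (algebraMap L F).injective] using hg0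
  have hg₁0 : g₁ ≠ 0 := by
    intro h; rw [h, mul_zero] at hg₁; exact hgmap0 hg₁
  set G : RatFunc L := algebraMap L[X] (RatFunc L) (minpoly L b) with hG
  have hGne : G ≠ 0 := by
    simpa [hG] using (map_ne_zero_iff _ (IsFractionRing.injective L[X] (RatFunc L))).mpr hg0
  -- the algebraMap of G into RatFunc F
  have key : algebraMap (RatFunc L) (RatFunc F) G
      = algebraMap F[X] (RatFunc F) ((X - C b) * g₁) := by
    rw [← hg₁, hG]
    exact ratFuncMap_algebraMap (algebraMap L F) (minpoly L b)
  have hGF : algebraMap (RatFunc L) (RatFunc F) G ≠ 0 := by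
    simp [map_ne_zero_iff _ (algebraMap (RatFunc L) (RatFunc F)).injective, hGne]
  have hx : algebraMap F[X] (RatFunc F) n / algebraMap F[X] (RatFunc F) (X - C b)
      = G⁻¹ • (algebraMap F[X] (RatFunc F) (n * g₁)) := by
    have hg₁F : algebraMap F[X] (RatFunc F) g₁ ≠ 0 := by
      simpa [map_ne_zero_iff _ (IsFractionRing.injective F[X] (RatFunc F))] using hg₁0
    rw [Algebra.smul_def, map_inv₀, key, map_mul, map_mul]
    exact div_eq_inv_mul_mul _ _ _ hg₁F
  rw [hx, map_smul, smul_eq_mul, div_eq_inv_mul]
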